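/- arXiv:2603.09920 — 6 statements merged into one kernel-verified Lean document; each statement's English description precedes it below -/
import Mathlib

section
/- Let (α, μ) be a finite measure space, n ≥ 1 an integer, ε > 0, and let 1 < Q < 1 + ε. Set m = n·Q·(1+ε)/(1+ε−Q). Suppose Σ : α → [0, ∞) is measurable with Σ ∈ L^{1+ε}(μ), and f : α → ℝⁿ is measurable with f ∈ L^m(μ; ℝⁿ). Then for every y₀ ∈ ℝⁿ, the function x ↦ Σ(x)·‖f(x) − y₀‖ⁿ belongs to L^Q(μ). -/
open MeasureTheory
open scoped ENNReal

/-- If `S ∈ L^{1+ε}(μ)` and `f ∈ L^m(μ; ℝⁿ)` with `m = nQ(1+ε)/(1+ε-Q)`, `1 < Q < 1+ε`,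
then `x ↦ S x * ‖f x - y₀‖ⁿ` belongs to `L^Q(μ)`. -/
theorem stmt_2 {α : Type*} [MeasurableSpace α] (μ : Measure α) [IsFiniteMeasure μ]
    (n : ℕ) (hn : 1 ≤ n) (ε Q : ℝ) (hε : 0 < ε) (hQ1 : 1 < Q) (hQ2 : Q < 1 + ε)
    (m : ℝ) (hm : m = n * Q * (1 + ε) / (1 + ε - Q))
    (S : α → ℝ) (hSmeas : Measurable S) (hSnonneg : ∀ x, 0 ≤ S x)
    (hS : MemLp S (ENNReal.ofReal (1 + ε)) μ)
    (f : α → EuclideanSpace ℝ (Fin n)) (hfmeas : Measurable f)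
    (hf : MemLp f (ENNReal.ofReal m) μ)
    (y₀ : EuclideanSpace ℝ (Fin n)) :
    MemLp (fun x => S x * ‖f x - y₀‖ ^ n) (ENNReal.ofReal Q) μ := by
  have hnpos : (0:ℝ) < n := by exact_mod_cast hn
  have hden : (0:ℝ) < 1 + ε - Q := by linarith
  have hmpos : 0 < m := by rw [hm]; positivity
  have hg : MemLp (fun x => f x - y₀) (ENNReal.ofReal m) μ := hf.sub (memLp_const y₀)
  have hg2 := hg.norm_rpow_div (n : ℝ≥0∞)
  simp only [ENNReal.toReal_natCast] at hg2
  have hg3 : MemLp (fun x => ‖f x - y₀‖ ^ n) (ENNReal.ofReal m / n) μ := by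
    refine hg2.congr_norm (((hfmeas.sub_const y₀).norm.pow_const n)).aestronglyMeasurable
      (Filter.Eventually.of_forall fun x => ?_)
    simp [Real.rpow_natCast, abs_of_nonneg (pow_nonneg (norm_nonneg _) n)]
  have key : (1 : ℝ≥0∞) / ENNReal.ofReal Q
      = 1 / ENNReal.ofReal (1 + ε) + 1 / (ENNReal.ofReal m / n) := by
    have hmn : ENNReal.ofReal m / (n : ℝ≥0∞) = ENNReal.ofReal (m / n) := by
      rw [ENNReal.ofReal_div_of_pos hnpos, ENNReal.ofReal_natCast]
    rw [hmn, one_div, one_div, one_div, ← ENNReal.ofReal_inv_of_pos (by linarith),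
      ← ENNReal.ofReal_inv_of_pos (show (0:ℝ) < m / n by positivity), ← ENNReal.ofReal_inv_of_pos (by positivity),
      ← ENNReal.ofReal_add (by positivity) (by positivity)]
    congr 1
    rw [hm]
    field_simp
    ring
  have hsm := hg3.smul hS (hpqr := ⟨by simpa only [one_div] using key.symm⟩)
  simpa [Pi.smul_apply, smul_eq_mul, Pi.mul_def] using hsm
end

section
/- Let (α, μ) be a measure space, ρ : α → [0, ∞) measurable with μ(ρ⁻¹{0}) = 0, and for r > 0 write U_r = {x ∈ α : ρ(x) < r}. Let n ≥ 1 be an integer and ε₁ > 0. Suppose h : α → ℝ is integrable on U_{ε₁}, that ∫_{U_r} h dμ = 0 for almost every r ∈ (0, ε₁), and that ∫_{U_{ε₁}} max(−h(x), 0)/ρ(x)ⁿ dμ(x) < ∞. Then the function x ↦ h(x)/ρ(x)ⁿ is integrable on U_{ε₁} and ∫_{U_{ε₁}} h(x)/ρ(x)ⁿ dμ(x) = 0. -/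
open MeasureTheory Set Filter
open scoped ENNReal Topology

lemma aux_ofReal_max0 (a : ℝ) : ENNReal.ofReal (max a 0) = ENNReal.ofReal a := by
  rcases le_total a 0 with h | h
  · rw [max_eq_right h, ENNReal.ofReal_zero, eq_comm, ENNReal.ofReal_eq_zero]; exact h
  · rw [max_eq_left h]

lemma aux_ofReal_abs (a : ℝ) :
    ENNReal.ofReal |a| = ENNReal.ofReal a + ENNReal.ofReal (-a) := by
  rcases le_total a 0 with h | h
  · rw [abs_of_nonpos h, ENNReal.ofReal_eq_zero.mpr h, zero_add]
  · rw [abs_of_nonneg h, ENNReal.ofReal_eq_zero.mpr (neg_nonpos.mpr h), add_zero]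

lemma aux_ofReal_le_nnnorm (a : ℝ) : ENNReal.ofReal a ≤ (‖a‖₊ : ℝ≥0∞) := by
  rw [← enorm_eq_nnnorm, Real.enorm_eq_ofReal_abs]
  exact ENNReal.ofReal_le_ofReal (le_abs_self _)

lemma aux_reduce {α : Type*} [MeasurableSpace α] (m : Measure α) {t : Set α}
    (ht : MeasurableSet t) (F : α → ℝ≥0∞) (h0 : ∀ᵐ x ∂m, x ∉ t → F x = 0) :
    ∫⁻ x, F x ∂m = ∫⁻ x, F x ∂(m.restrict t) := by
  rw [← lintegral_indicator ht]
  apply lintegral_congr_ae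
  filter_upwards [h0] with x hx
  by_cases hxt : x ∈ t
  · rw [Set.indicator_of_mem hxt]
  · rw [Set.indicator_of_notMem hxt, hx hxt]

lemma aux_reduce_int {α : Type*} [MeasurableSpace α] (m : Measure α) {t : Set α}
    (ht : MeasurableSet t) (F : α → ℝ) (h0 : ∀ᵐ x ∂m, x ∉ t → F x = 0) :
    ∫ x, F x ∂m = ∫ x, F x ∂(m.restrict t) := by
  rw [← integral_indicator ht]
  apply integral_congr_ae
  filter_upwards [h0] with x hx
  by_cases hxt : x ∈ t
  · rw [Set.indicator_of_mem hxt]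
  · rw [Set.indicator_of_notMem hxt, hx hxt]

lemma aux_posneg {α : Type*} [MeasurableSpace α] {M : Measure α} {f : α → ℝ}
    (hf : Integrable f M) (h0 : ∫ x, f x ∂M = 0) :
    ∫⁻ x, ENNReal.ofReal (f x) ∂M = ∫⁻ x, ENNReal.ofReal (-f x) ∂M := by
  have hp : ∫⁻ x, ENNReal.ofReal (f x) ∂M ≠ ⊤ :=
    ne_of_lt (lt_of_le_of_lt (lintegral_mono fun x => aux_ofReal_le_nnnorm _) hf.2)
  have hm : ∫⁻ x, ENNReal.ofReal (-f x) ∂M ≠ ⊤ := by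
    refine ne_of_lt (lt_of_le_of_lt (lintegral_mono fun x => ?_) hf.2)
    calc ENNReal.ofReal (-f x) ≤ (‖-f x‖₊ : ℝ≥0∞) := aux_ofReal_le_nnnorm _
      _ = (‖f x‖₊ : ℝ≥0∞) := by rw [nnnorm_neg]
  have key := integral_eq_lintegral_pos_part_sub_lintegral_neg_part hf
  rw [h0] at key
  have heq : (∫⁻ x, ENNReal.ofReal (f x) ∂M).toReal
      = (∫⁻ x, ENNReal.ofReal (-f x) ∂M).toReal := by linarith
  exact (ENNReal.toReal_eq_toReal_iff' hp hm).mp heq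

lemma aux_rint {n : ℕ} (hn : 1 ≤ n) {t ε : ℝ} (ht : 0 < t) (htε : t < ε) :
    ∫⁻ r in Set.Ioo t ε, ENNReal.ofReal ((n : ℝ) / r ^ (n + 1)) =
      ENNReal.ofReal ((t ^ n)⁻¹ - (ε ^ n)⁻¹) := by
  have hε : 0 < ε := ht.trans htε
  set f : ℝ → ℝ := fun r => (n : ℝ) / r ^ (n + 1) with hf
  have hcont : ContinuousOn f (Set.Icc t ε) := by
    apply ContinuousOn.div continuousOn_const (by fun_prop)
    intro r hr
    exact pow_ne_zero _ (ne_of_gt (lt_of_lt_of_le ht hr.1))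
  have hInt : IntegrableOn f (Set.Ioo t ε) :=
    (hcont.integrableOn_Icc).mono_set Set.Ioo_subset_Icc_self
  have hnn : 0 ≤ᵐ[volume.restrict (Set.Ioo t ε)] f := by
    filter_upwards [ae_restrict_mem measurableSet_Ioo] with r hr
    have : 0 < r := ht.trans hr.1
    positivity
  rw [← ofReal_integral_eq_lintegral_ofReal hInt hnn]
  congr 1
  have h0 : (0:ℝ) ∉ Set.uIcc t ε := by
    rw [Set.uIcc_of_le htε.le]
    intro h0; exact absurd h0.1 (not_le.mpr ht)
  have key : ∫ r in Set.Ioo t ε, f r = ∫ r in t..ε, f r := by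
    rw [intervalIntegral.integral_of_le htε.le, MeasureTheory.integral_Ioc_eq_integral_Ioo]
  rw [key]
  have congr1 : ∫ r in t..ε, f r = ∫ r in t..ε, (n : ℝ) * r ^ (-((n + 1 : ℕ)) : ℤ) := by
    apply intervalIntegral.integral_congr
    intro r hr
    have hr0 : r ≠ 0 := fun h => h0 (h ▸ hr)
    rw [hf]
    simp only [zpow_neg, zpow_natCast]
    rw [div_eq_mul_inv]
  rw [congr1, intervalIntegral.integral_const_mul,
    integral_zpow (Or.inr ⟨by omega, h0⟩)]
  have hn0 : (n : ℝ) ≠ 0 := Nat.cast_ne_zero.mpr (by omega)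
  have : (-((n + 1 : ℕ)) : ℤ) + 1 = -(n : ℤ) := by push_cast; ring
  rw [this]
  rw [zpow_neg, zpow_neg, zpow_natCast, zpow_natCast]
  push_cast
  field_simp
  ring_nf
  rw [mul_right_comm _ _ ((n:ℝ)⁻¹), mul_inv_cancel₀ hn0, one_mul,
    mul_right_comm _ _ ((n:ℝ)⁻¹), mul_inv_cancel₀ hn0, one_mul]

lemma aux_swap {α : Type*} [MeasurableSpace α] (ν : Measure α) [SigmaFinite ν]
    (ρ : α → ℝ) (hρ : Measurable ρ) (hρnn : ∀ x, 0 ≤ ρ x) (ε₁ : ℝ)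
    (k : ℝ → ℝ≥0∞) (hk : Measurable k)
    (g : α → ℝ≥0∞) (hg : Measurable g) :
    ∫⁻ x, g x * (∫⁻ r in Set.Ioo (ρ x) ε₁, k r) ∂ν
      = ∫⁻ r in Set.Ioo 0 ε₁, k r * (∫⁻ x in {x | ρ x < r}, g x ∂ν) := by
  set F : α × ℝ → ℝ≥0∞ := ({p : α × ℝ | ρ p.1 < p.2}).indicator (fun p => k p.2 * g p.1)
    with hF
  have hsetmeas : MeasurableSet {p : α × ℝ | ρ p.1 < p.2} :=
    measurableSet_lt (hρ.comp measurable_fst) measurable_snd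
  have hFmeas : Measurable F :=
    Measurable.indicator ((hk.comp measurable_snd).mul (hg.comp measurable_fst)) hsetmeas
  have step1 : ∀ x, g x * (∫⁻ r in Set.Ioo (ρ x) ε₁, k r)
      = ∫⁻ r in Set.Ioo 0 ε₁, F (x, r) := by
    intro x
    have e1 : (fun r => F (x, r)) = (Set.Ioi (ρ x)).indicator (fun r => k r * g x) := by
      funext r
      simp only [hF, Set.indicator_apply, Set.mem_setOf_eq, Set.mem_Ioi]
    rw [e1, lintegral_indicator measurableSet_Ioi _,
      Measure.restrict_restrict measurableSet_Ioi]
    have e2 : Set.Ioi (ρ x) ∩ Set.Ioo 0 ε₁ = Set.Ioo (ρ x) ε₁ := by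
      ext r
      simp only [Set.mem_inter_iff, Set.mem_Ioi, Set.mem_Ioo]
      constructor
      · rintro ⟨h1, _, h3⟩; exact ⟨h1, h3⟩
      · rintro ⟨h1, h2⟩; exact ⟨h1, lt_of_le_of_lt (hρnn x) h1, h2⟩
    rw [e2, lintegral_mul_const _ hk, mul_comm]
  have step3 : ∀ r, ∫⁻ x, F (x, r) ∂ν = k r * (∫⁻ x in {x | ρ x < r}, g x ∂ν) := by
    intro r
    have e1 : (fun x => F (x, r)) = ({x | ρ x < r}).indicator (fun x => k r * g x) := by
      funext x
      simp only [hF, Set.indicator_apply, Set.mem_setOf_eq]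
    rw [e1, lintegral_indicator (measurableSet_lt hρ measurable_const) _,
      lintegral_const_mul _ hg]
  calc ∫⁻ x, g x * (∫⁻ r in Set.Ioo (ρ x) ε₁, k r) ∂ν
      = ∫⁻ x, (∫⁻ r in Set.Ioo 0 ε₁, F (x, r)) ∂ν := lintegral_congr step1
    _ = ∫⁻ r in Set.Ioo 0 ε₁, ∫⁻ x, F (x, r) ∂ν := lintegral_lintegral_swap hFmeas.aemeasurable
    _ = ∫⁻ r in Set.Ioo 0 ε₁, k r * (∫⁻ x in {x | ρ x < r}, g x ∂ν) := lintegral_congr step3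

set_option maxHeartbeats 1000000 in
/-- If `h` is integrable on `U_{ε₁} = {ρ < ε₁}`, `∫_{U_r} h dμ = 0` for a.e. `r ∈ (0, ε₁)`,
and the negative part of `h` is integrable against the weight `ρ⁻ⁿ`, then `h/ρⁿ` is
integrable on `U_{ε₁}` with vanishing integral. -/
theorem stmt_4 {α : Type*} [MeasurableSpace α] (μ : Measure α)
    (ρ : α → ℝ) (hρmeas : Measurable ρ) (hρnonneg : ∀ x, 0 ≤ ρ x)
    (hρ0 : μ (ρ ⁻¹' {0}) = 0)
    (n : ℕ) (hn : 1 ≤ n) (ε₁ : ℝ) (hε₁ : 0 < ε₁)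
    (h : α → ℝ)
    (hint : IntegrableOn h {x | ρ x < ε₁} μ)
    (hzero : ∀ᵐ r ∂(volume.restrict (Set.Ioo (0 : ℝ) ε₁)),
      ∫ x in {x | ρ x < r}, h x ∂μ = 0)
    (hneg : ∫⁻ x in {x | ρ x < ε₁}, ENNReal.ofReal (max (-h x) 0 / ρ x ^ n) ∂μ < ⊤) :
    IntegrableOn (fun x => h x / ρ x ^ n) {x | ρ x < ε₁} μ ∧
      ∫ x in {x | ρ x < ε₁}, h x / ρ x ^ n ∂μ = 0 := by
  classical
  set S : Set α := {x | ρ x < ε₁} with hSdef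
  have hSmeas : MeasurableSet S := measurableSet_lt hρmeas measurable_const
  set m : Measure α := μ.restrict S with hmdef
  have hint' : Integrable h m := hint
  have hpos : ∀ᵐ x ∂μ, 0 < ρ x := by
    rw [ae_iff]
    refine measure_mono_null (fun x hx => ?_) hρ0
    simp only [Set.mem_setOf_eq, not_lt] at hx
    exact le_antisymm hx (hρnonneg x)
  obtain ⟨t, htmeas, ht0, htσ⟩ := hint'.aefinStronglyMeasurable.exists_set_sigmaFinite
  haveI : SigmaFinite (m.restrict t) := htσ
  set ν : Measure α := m.restrict t with hνdef
  have hzt : ∀ᵐ x ∂m, x ∉ t → h x = 0 := (ae_restrict_iff' htmeas.compl).mp ht0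
  have hsm : AEStronglyMeasurable h m := hint'.aestronglyMeasurable
  set h' : α → ℝ := hsm.mk h with hh'def
  have hh'meas : Measurable h' := hsm.stronglyMeasurable_mk.measurable
  have heq : h =ᵐ[m] h' := hsm.ae_eq_mk
  set k : ℝ → ℝ≥0∞ := fun r => ENNReal.ofReal ((n : ℝ) / r ^ (n + 1)) with hkdef
  have hkmeas : Measurable k := by fun_prop
  set w : α → ℝ≥0∞ := fun x => ENNReal.ofReal ((ρ x ^ n)⁻¹) with hwdef
  have hwmeas : Measurable w := by fun_prop
  set c : ℝ≥0∞ := ENNReal.ofReal ((ε₁ ^ n)⁻¹) with hcdef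
  have hcne : c ≠ ⊤ := ENNReal.ofReal_ne_top
  set gp : α → ℝ≥0∞ := fun x => ENNReal.ofReal (h' x) with hgpdef
  set gm : α → ℝ≥0∞ := fun x => ENNReal.ofReal (-h' x) with hgmdef
  have hgpmeas : Measurable gp := by fun_prop
  have hgmmeas : Measurable gm := by fun_prop
  -- weight identity
  have hw : ∀ᵐ x ∂m, w x = c + ∫⁻ r in Set.Ioo (ρ x) ε₁, k r := by
    filter_upwards [ae_restrict_mem hSmeas, ae_restrict_of_ae hpos] with x hxS hxpos
    have hxε : ρ x < ε₁ := hxS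
    rw [aux_rint hn hxpos hxε]
    have h1 : (0:ℝ) ≤ (ε₁ ^ n)⁻¹ := by positivity
    have h2 : (ε₁ ^ n)⁻¹ ≤ (ρ x ^ n)⁻¹ := by
      apply inv_anti₀ (by positivity)
      exact pow_le_pow_left₀ (hρnonneg x) hxε.le n
    rw [← ENNReal.ofReal_add h1 (by linarith)]
    simp only [hwdef, hcdef]
    congr 1
    ring
  -- Tonelli
  have tonelli : ∀ g : α → ℝ≥0∞, Measurable g →
      ∫⁻ x, g x * w x ∂ν = c * (∫⁻ x, g x ∂ν)
        + ∫⁻ r in Set.Ioo 0 ε₁, k r * (∫⁻ x in {x | ρ x < r}, g x ∂ν) := by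
    intro g hg
    have h1 : ∫⁻ x, g x * w x ∂ν
        = ∫⁻ x, (g x * c + g x * (∫⁻ r in Set.Ioo (ρ x) ε₁, k r)) ∂ν := by
      apply lintegral_congr_ae
      filter_upwards [ae_restrict_of_ae hw] with x hx
      rw [hx, mul_add]
    rw [h1, lintegral_add_left (hg.mul_const c)]
    congr 1
    · rw [lintegral_mul_const _ hg, mul_comm]
    · exact aux_swap ν ρ hρmeas hρnonneg ε₁ k hkmeas g hg
  -- finiteness of unweighted integrals
  have hfin_abs : ∫⁻ x, ENNReal.ofReal (|h' x|) ∂m < ⊤ := by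
    have habs : ∀ᵐ x ∂m, ENNReal.ofReal |h' x| = ENNReal.ofReal |h x| := by
      filter_upwards [heq] with x hx; rw [hx]
    rw [lintegral_congr_ae habs]
    refine lt_of_le_of_lt (lintegral_mono fun x => ?_) hint'.2
    rw [Real.enorm_eq_ofReal_abs]
  have hP : ∫⁻ x, gp x ∂ν ≠ ⊤ := by
    refine ne_of_lt (lt_of_le_of_lt (lintegral_mono' Measure.restrict_le_self
      (fun x => ?_)) hfin_abs)
    exact ENNReal.ofReal_le_ofReal (le_abs_self _)
  have hN : ∫⁻ x, gm x ∂ν ≠ ⊤ := by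
    refine ne_of_lt (lt_of_le_of_lt (lintegral_mono' Measure.restrict_le_self
      (fun x => ?_)) hfin_abs)
    exact ENNReal.ofReal_le_ofReal (neg_le_abs _)
  -- reductions from m to ν
  have hredp : ∫⁻ x, gp x * w x ∂m = ∫⁻ x, gp x * w x ∂ν := by
    apply aux_reduce m htmeas
    filter_upwards [hzt, heq] with x hx hx' hxt
    simp only [hgpdef, ← hx', hx hxt, ENNReal.ofReal_zero, zero_mul]
  have hredm : ∫⁻ x, gm x * w x ∂m = ∫⁻ x, gm x * w x ∂ν := by
    apply aux_reduce m htmeas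
    filter_upwards [hzt, heq] with x hx hx' hxt
    simp only [hgmdef, ← hx', hx hxt, neg_zero, ENNReal.ofReal_zero, zero_mul]
  -- identify hneg
  have hnegm : ∫⁻ x, gm x * w x ∂m < ⊤ := by
    refine lt_of_le_of_lt (le_of_eq ?_) hneg
    apply lintegral_congr_ae
    filter_upwards [heq] with x hx
    simp only [hgmdef, hwdef]
    rw [div_eq_mul_inv, ENNReal.ofReal_mul' (inv_nonneg.mpr (pow_nonneg (hρnonneg x) n)), aux_ofReal_max0, hx]
  -- per-radius equality
  have hKK : ∀ᵐ r ∂(volume.restrict (Set.Ioo (0:ℝ) ε₁)),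
      ∫⁻ x in {x | ρ x < r}, gp x ∂ν = ∫⁻ x in {x | ρ x < r}, gm x ∂ν := by
    filter_upwards [hzero, ae_restrict_mem measurableSet_Ioo] with r hr0 hrI
    set B : Set α := {x | ρ x < r} with hBdef
    have hBmeas : MeasurableSet B := measurableSet_lt hρmeas measurable_const
    have hBS : B ⊆ S := fun x hx => lt_trans hx hrI.2
    have hintB : Integrable h (ν.restrict B) :=
      (hint'.mono_measure Measure.restrict_le_self).mono_measure Measure.restrict_le_self
    have hi0 : ∫ x, h x ∂(ν.restrict B) = 0 := by
      have e1 : ν.restrict B = (m.restrict B).restrict t := by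
        rw [hνdef]; exact Measure.restrict_comm hBmeas
      have e2 : ∫ x, h x ∂(m.restrict B) = ∫ x, h x ∂((m.restrict B).restrict t) :=
        aux_reduce_int _ htmeas _ (ae_restrict_of_ae hzt)
      have e3 : m.restrict B = μ.restrict B := by
        rw [hmdef, Measure.restrict_restrict hBmeas, Set.inter_eq_left.mpr hBS]
      rw [e1, ← e2, e3]
      exact hr0
    have hpn := aux_posneg hintB hi0
    have hheq : h =ᵐ[ν.restrict B] h' := ae_restrict_of_ae (ae_restrict_of_ae heq)
    calc ∫⁻ x in B, gp x ∂ν = ∫⁻ x, ENNReal.ofReal (h x) ∂(ν.restrict B) := by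
          apply lintegral_congr_ae
          filter_upwards [hheq] with x hx
          simp only [hgpdef, hx]
      _ = ∫⁻ x, ENNReal.ofReal (-h x) ∂(ν.restrict B) := hpn
      _ = ∫⁻ x in B, gm x ∂ν := by
          apply lintegral_congr_ae
          filter_upwards [hheq] with x hx
          simp only [hgmdef, hx]
  have hKKint : ∫⁻ r in Set.Ioo (0:ℝ) ε₁, k r * (∫⁻ x in {x | ρ x < r}, gp x ∂ν)
      = ∫⁻ r in Set.Ioo (0:ℝ) ε₁, k r * (∫⁻ x in {x | ρ x < r}, gm x ∂ν) := by
    apply lintegral_congr_ae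
    filter_upwards [hKK] with r hr
    rw [hr]
  have Tp := tonelli gp hgpmeas
  have Tm := tonelli gm hgmmeas
  set K : ℝ≥0∞ := ∫⁻ r in Set.Ioo (0:ℝ) ε₁, k r * (∫⁻ x in {x | ρ x < r}, gm x ∂ν)
    with hKdef
  rw [hKKint] at Tp
  have hνm : ∫⁻ x, gm x * w x ∂ν < ⊤ := by rw [← hredm]; exact hnegm
  have hK : K ≠ ⊤ := by
    refine ne_of_lt (lt_of_le_of_lt ?_ hνm)
    rw [Tm]; exact le_add_self
  have hνp : ∫⁻ x, gp x * w x ∂ν < ⊤ := by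
    rw [Tp]
    exact ENNReal.add_lt_top.mpr
      ⟨ENNReal.mul_lt_top hcne.lt_top (lt_top_iff_ne_top.mpr hP), lt_top_iff_ne_top.mpr hK⟩
  have hAp : ∫⁻ x, gp x * w x ∂m < ⊤ := by rw [hredp]; exact hνp
  -- integrability
  have hfin : HasFiniteIntegral (fun x => h x / ρ x ^ n) m := by
    have hnorm : ∀ᵐ x ∂m, ‖h x / ρ x ^ n‖ₑ = gp x * w x + gm x * w x := by
      filter_upwards [heq] with x hx
      rw [Real.enorm_eq_ofReal_abs, abs_div, abs_of_nonneg (pow_nonneg (hρnonneg x) n),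
        div_eq_mul_inv, ENNReal.ofReal_mul' (inv_nonneg.mpr (pow_nonneg (hρnonneg x) n)),
        aux_ofReal_abs, hx, add_mul]
      try simp only [hgpdef, hgmdef, hwdef]
    rw [hasFiniteIntegral_def]
    rw [lintegral_congr_ae hnorm, lintegral_add_left (f := fun x => gp x * w x) (hgpmeas.mul hwmeas)]
    exact ENNReal.add_lt_top.mpr ⟨hAp, hnegm⟩
  have hmf : AEStronglyMeasurable (fun x => h x / ρ x ^ n) m := by
    apply (Measurable.aestronglyMeasurable (hh'meas.div (hρmeas.pow_const n))).congr
    filter_upwards [heq] with x hx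
    rw [hx]
    rfl
  have hintfinal : Integrable (fun x => h x / ρ x ^ n) m := ⟨hmf, hfin⟩
  refine ⟨hintfinal, ?_⟩
  -- integral of h over S vanishes, via a monotone sequence of good radii
  have hGne : ∀ a, 0 ≤ a → a < ε₁ →
      ∃ b, (∫ x in {x | ρ x < b}, h x ∂μ = 0) ∧ a < b ∧ b < ε₁ := by
    intro a ha haε
    by_contra hcon
    push_neg at hcon
    have hnull := hzero
    rw [ae_iff, Measure.restrict_apply' measurableSet_Ioo] at hnull
    have hsub : Set.Ioo a ε₁ ⊆
        {r | ¬ ∫ x in {x | ρ x < r}, h x ∂μ = 0} ∩ Set.Ioo 0 ε₁ := by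
      intro r hr
      refine ⟨fun hcontra => ?_, lt_of_le_of_lt ha hr.1, hr.2⟩
      exact absurd hr.2 (not_lt.mpr (hcon r hcontra hr.1))
    have hthis := measure_mono_null hsub hnull
    rw [Real.volume_Ioo] at hthis
    have := ENNReal.ofReal_eq_zero.mp hthis
    linarith
  have hbd : ∀ kk : ℕ, 0 ≤ ε₁ - ε₁ / (kk + 1) ∧ ε₁ - ε₁ / (kk + 1) < ε₁ := by
    intro kk
    constructor
    · have h1 : (1:ℝ) ≤ (kk:ℝ) + 1 := by
        have : (0:ℝ) ≤ (kk:ℝ) := Nat.cast_nonneg kk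
        linarith
      have := div_le_self hε₁.le h1
      linarith
    · have : 0 < ε₁ / ((kk:ℝ) + 1) := by positivity
      linarith
  choose sfun hs0 hs1 hs2 using fun kk : ℕ =>
    hGne (ε₁ - ε₁ / (kk + 1)) (hbd kk).1 (hbd kk).2
  set msup : ℕ → ℝ := fun kk => (Finset.range (kk + 1)).sup' Finset.nonempty_range_add_one sfun
    with hmsupdef
  have hmsupG : ∀ kk, ∫ x in {x | ρ x < msup kk}, h x ∂μ = 0 := by
    intro kk
    obtain ⟨j, _, hje⟩ :=
      Finset.exists_mem_eq_sup' (Finset.nonempty_range_add_one (n := kk)) sfun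
    simp only [hmsupdef]
    rw [hje]
    exact hs0 j
  have hmsuplt : ∀ kk, msup kk < ε₁ := by
    intro kk
    simp only [hmsupdef]
    exact (Finset.sup'_lt_iff Finset.nonempty_range_add_one).mpr fun j _ => hs2 j
  have hmono : Monotone fun kk => {x | ρ x < msup kk} := by
    intro i j hij x hx
    have : msup i ≤ msup j := by
      simp only [hmsupdef]
      exact Finset.sup'_mono sfun (Finset.range_subset_range.mpr (by omega))
        Finset.nonempty_range_add_one
    exact lt_of_lt_of_le hx this
  have hunion : (⋃ kk, {x | ρ x < msup kk}) = S := by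
    apply Set.Subset.antisymm
    · exact Set.iUnion_subset fun kk x hx => lt_trans hx (hmsuplt kk)
    · intro x hx
      have hxε : ρ x < ε₁ := hx
      have hδ : 0 < ε₁ - ρ x := sub_pos.mpr hxε
      obtain ⟨kk, hkk⟩ := exists_nat_gt (ε₁ / (ε₁ - ρ x))
      refine Set.mem_iUnion.mpr ⟨kk, ?_⟩
      have h1 : ε₁ / ((kk:ℝ) + 1) < ε₁ - ρ x := by
        rw [div_lt_iff₀ (by positivity)]
        have h2 : ε₁ / (ε₁ - ρ x) * (ε₁ - ρ x) = ε₁ := by field_simp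
        nlinarith [mul_lt_mul_of_pos_right hkk hδ]
      have hle : sfun kk ≤ msup kk := by
        simp only [hmsupdef]
        exact Finset.le_sup' sfun (Finset.self_mem_range_succ kk)
      have := hs1 kk
      show ρ x < msup kk
      linarith
  have hSint0 : ∫ x, h x ∂m = 0 := by
    have htend := tendsto_setIntegral_of_monotone
      (fun kk => measurableSet_lt hρmeas measurable_const) hmono
      (by rw [hunion]; exact hint)
    have htend0 : Tendsto (fun _ : ℕ => (0:ℝ)) atTop
        (𝓝 (∫ x in ⋃ kk, {x | ρ x < msup kk}, h x ∂μ)) :=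
      htend.congr hmsupG
    have := tendsto_nhds_unique htend0 tendsto_const_nhds
    rw [hunion] at this
    exact this
  -- P = N
  have hi0ν : ∫ x, h x ∂ν = 0 := by
    rw [hνdef, ← aux_reduce_int m htmeas h hzt]
    exact hSint0
  have hPN : ∫⁻ x, gp x ∂ν = ∫⁻ x, gm x ∂ν := by
    have hintν : Integrable h ν := hint'.mono_measure Measure.restrict_le_self
    have hpn := aux_posneg hintν hi0ν
    have hνeq : h =ᵐ[ν] h' := ae_restrict_of_ae heq
    calc ∫⁻ x, gp x ∂ν = ∫⁻ x, ENNReal.ofReal (h x) ∂ν := by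
          apply lintegral_congr_ae
          filter_upwards [hνeq] with x hx
          simp only [hgpdef, hx]
      _ = ∫⁻ x, ENNReal.ofReal (-h x) ∂ν := hpn
      _ = ∫⁻ x, gm x ∂ν := by
          apply lintegral_congr_ae
          filter_upwards [hνeq] with x hx
          simp only [hgmdef, hx]
  -- final computation
  have key := integral_eq_lintegral_pos_part_sub_lintegral_neg_part hintfinal
  have ep : ∫⁻ x, ENNReal.ofReal (h x / ρ x ^ n) ∂m = c * (∫⁻ x, gp x ∂ν) + K := by
    rw [← Tp, ← hredp]
    apply lintegral_congr_ae
    filter_upwards [heq] with x hx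
    rw [div_eq_mul_inv, ENNReal.ofReal_mul' (inv_nonneg.mpr (pow_nonneg (hρnonneg x) n)), hx]
    try simp only [hgpdef, hwdef]
  have em : ∫⁻ x, ENNReal.ofReal (-(h x / ρ x ^ n)) ∂m = c * (∫⁻ x, gm x ∂ν) + K := by
    rw [← Tm, ← hredm]
    apply lintegral_congr_ae
    filter_upwards [heq] with x hx
    rw [← neg_div, div_eq_mul_inv, ENNReal.ofReal_mul' (inv_nonneg.mpr (pow_nonneg (hρnonneg x) n)), hx]
    try simp only [hgmdef, hwdef]
  rw [key, ep, em, hPN, sub_self]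
end

section
/- Let X be a locally compact metric space, f : X → ℝⁿ a continuous map, and y₀ ∈ ℝⁿ such that the fiber f⁻¹{y₀} is totally disconnected. Then for every x₀ ∈ f⁻¹{y₀} there exists ε₁ > 0 such that the connected component U_{ε₁}(x₀) of x₀ in the open set f⁻¹(B(y₀, ε₁)) has compact closure contained in X. -/
/-!
Take a compact neighbourhood `K` of `x₀`. The compact, totally disconnected set
`K ∩ f⁻¹{y₀}` splits into two relatively clopen pieces, the one containing `x₀` lying in
the interior of `K`; separate them by disjoint open sets `u ∋ x₀`, `u ⊆ int K`, and `v`.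
By compactness of `K`, for small `ε` the set `K ∩ f⁻¹(closedBall y₀ ε)` still lies in
`u ∪ v`, so its part `A` outside `v` is compact and `f⁻¹(B(y₀, ε)) ∩ u` is clopen in
`f⁻¹(B(y₀, ε))`. Hence the component of `x₀` stays inside the compact set `A`.
-/

open Set Metric

theorem IsCompact.exists_isOpen_split_of_isTotallyDisconnected {X : Type*} [TopologicalSpace X]
    [T2Space X] {F U : Set X} (hF : IsCompact F) (htd : IsTotallyDisconnected F) {x : X}
    (hxF : x ∈ F) (hU : IsOpen U) (hxU : x ∈ U) :
    ∃ u v : Set X, IsOpen u ∧ IsOpen v ∧ Disjoint u v ∧ x ∈ u ∧ u ⊆ U ∧ F ⊆ u ∪ v := by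
  have : CompactSpace F := isCompact_iff_compactSpace.1 hF
  have : TotallyDisconnectedSpace F := totallyDisconnectedSpace_subtype_iff.2 htd
  obtain ⟨V, hV, hxV, hVU⟩ := compact_exists_isClopen_in_isOpen
    (hU.preimage continuous_subtype_val) (show (⟨x, hxF⟩ : F) ∈ Subtype.val ⁻¹' U from hxU)
  have hB : IsCompact (Subtype.val '' V) := hV.isClosed.isCompact.image continuous_subtype_val
  have hC : IsCompact (F \ Subtype.val '' V) :=
    image_val_compl ▸ hV.compl.isClosed.isCompact.image continuous_subtype_val
  obtain ⟨u, v, hu, hv, hBu, hCv, huv⟩ :=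
    SeparatedNhds.of_isCompact_isCompact hB hC disjoint_sdiff_right
  refine ⟨u ∩ U, v, hu.inter hU, hv, huv.mono_left inter_subset_left,
    ⟨hBu ⟨_, hxV, rfl⟩, hxU⟩, inter_subset_right, fun y hy => ?_⟩
  by_cases hyB : y ∈ Subtype.val '' V
  · obtain ⟨z, hzV, rfl⟩ := hyB
    exact Or.inl ⟨hBu ⟨z, hzV, rfl⟩, hVU hzV⟩
  · exact Or.inr (hCv ⟨hy, hyB⟩)

theorem IsCompact.exists_inter_preimage_closedBall_subset {X Y : Type*} [TopologicalSpace X]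
    [MetricSpace Y] {f : X → Y} {K O : Set X} (hK : IsCompact K) (hf : ContinuousOn f K)
    (hO : IsOpen O) {y : Y} (hKO : K ∩ f ⁻¹' {y} ⊆ O) :
    ∃ ε > 0, K ∩ f ⁻¹' closedBall y ε ⊆ O := by
  have hy : y ∉ f '' (K \ O) := fun ⟨x, hx, hxy⟩ => hx.2 (hKO ⟨hx.1, hxy⟩)
  have hclosed : IsClosed (f '' (K \ O)) :=
    ((hK.diff hO).image_of_continuousOn (hf.mono sdiff_subset)).isClosed
  obtain ⟨ε, hε, hball⟩ := nhds_basis_closedBall.mem_iff.1 (hclosed.isOpen_compl.mem_nhds hy)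
  refine ⟨ε, hε, fun x hx => ?_⟩
  by_contra hxO
  exact hball hx.2 ⟨x, ⟨hx.1, hxO⟩, rfl⟩

theorem connectedComponentIn_subset_of_inter_subset {X : Type*} [TopologicalSpace X]
    {W u A : Set X} {x : X} (hu : IsOpen u) (hA : IsClosed A) (hAu : A ⊆ u) (hWu : W ∩ u ⊆ A)
    (hx : x ∈ W ∩ u) : connectedComponentIn W x ⊆ A := by
  have hCW := connectedComponentIn_subset W x
  have hcover : connectedComponentIn W x ⊆ u ∪ Aᶜ := fun y _ => by
    by_cases hyA : y ∈ A
    exacts [Or.inl (hAu hyA), Or.inr hyA]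
  have hdisj : connectedComponentIn W x ∩ (u ∩ Aᶜ) = ∅ :=
    eq_empty_of_forall_notMem fun y ⟨hyC, hyu, hyA⟩ => hyA (hWu ⟨hCW hyC, hyu⟩)
  rcases isPreconnected_iff_subset_of_disjoint.1 isPreconnected_connectedComponentIn
    u Aᶜ hu hA.isOpen_compl hcover hdisj with hsub | hsub
  · exact fun y hy => hWu ⟨hCW hy, hsub hy⟩
  · exact absurd (hWu hx) (hsub (mem_connectedComponentIn hx.1))

/-- If the fiber `f⁻¹{y₀}` of a continuous map on a locally compact metric space is
totally disconnected, then for every `x₀` in the fiber there is `ε₁ > 0` such that the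
connected component of `x₀` in `f⁻¹(B(y₀, ε₁))` has compact closure. -/
theorem stmt_8 {X : Type*} [MetricSpace X] [LocallyCompactSpace X]
    (n : ℕ) (f : X → EuclideanSpace ℝ (Fin n)) (hf : Continuous f)
    (y₀ : EuclideanSpace ℝ (Fin n))
    (hfiber : IsTotallyDisconnected (f ⁻¹' {y₀}))
    (x₀ : X) (hx₀ : f x₀ = y₀) :
    ∃ ε₁ : ℝ, 0 < ε₁ ∧
      IsCompact (closure (connectedComponentIn (f ⁻¹' Metric.ball y₀ ε₁) x₀)) := by
  obtain ⟨K, hK, hKx₀⟩ := exists_compact_mem_nhds x₀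
  obtain ⟨u, v, hu, hv, huv, hx₀u, huK, hFuv⟩ :=
    (hK.inter_right (isClosed_singleton.preimage hf)).exists_isOpen_split_of_isTotallyDisconnected
      (fun t ht => hfiber t (ht.trans inter_subset_right)) ⟨mem_of_mem_nhds hKx₀, hx₀⟩
      isOpen_interior (mem_interior_iff_mem_nhds.2 hKx₀)
  obtain ⟨ε, hε, hKε⟩ :=
    hK.exists_inter_preimage_closedBall_subset hf.continuousOn (hu.union hv) hFuv
  set A := (K ∩ f ⁻¹' closedBall y₀ ε) \ v
  have hA : IsCompact A := (hK.inter_right (isClosed_closedBall.preimage hf)).diff hv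
  have hAu : A ⊆ u := fun x hx => (hKε hx.1).resolve_right hx.2
  have hWuA : f ⁻¹' ball y₀ ε ∩ u ⊆ A := fun x hx =>
    ⟨⟨interior_subset (huK hx.2), ball_subset_closedBall hx.1⟩, huv.notMem_of_mem_left hx.2⟩
  have hx₀W : x₀ ∈ f ⁻¹' ball y₀ ε := by simpa [hx₀] using hε
  refine ⟨ε, hε, hA.of_isClosed_subset isClosed_closure (closure_minimal ?_ hA.isClosed)⟩
  exact connectedComponentIn_subset_of_inter_subset hu hA.isClosed hAu hWuA ⟨hx₀W, hx₀u⟩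
end

section
/- Let X be a locally compact metric space, f : X → ℝⁿ a continuous map, and y₀ ∈ ℝⁿ such that the fiber f⁻¹{y₀} is totally disconnected. Let x₀ ∈ f⁻¹{y₀} and suppose ε₁ > 0 is such that the closure of U_{ε₁}(x₀) is compact and contained in X. Then ⋂_{0 < ε ≤ ε₁} closure(U_ε(x₀)) = {x₀}. -/
/-!
For `0 < ε ≤ ε₁` the sets `closure U_ε(x₀)` are compact, connected and decrease as `ε` decreases,
so their intersection is connected. It contains `x₀` and lies in the totally disconnected
fibre `f⁻¹{y₀}`, hence it is `{x₀}`.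
-/

open Set

theorem IsPreconnected.iInter_of_directed {X ι : Type*} [TopologicalSpace X] [T2Space X]
    [Nonempty ι] {K : ι → Set X} (hd : Directed (· ⊇ ·) K) (hc : ∀ i, IsCompact (K i))
    (hK : ∀ i, IsPreconnected (K i)) : IsPreconnected (⋂ i, K i) := by
  have hcl : ∀ i, IsClosed (K i) := fun i => (hc i).isClosed
  have hcpt : IsCompact (⋂ i, K i) := (hc (Classical.arbitrary ι)).of_isClosed_subset
    (isClosed_iInter hcl) (iInter_subset K _)
  rw [isPreconnected_iff_subset_of_fully_disjoint_closed hcpt.isClosed]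
  intro u v hu hv huv hdisj
  obtain ⟨U, V, hU, hV, huU, hvV, hUV⟩ := SeparatedNhds.of_isCompact_isCompact
    (hcpt.inter_right hu) (hcpt.inter_right hv)
    (hdisj.mono inter_subset_right inter_subset_right)
  -- Compactness pushes some `K i` inside the neighbourhood `U ∪ V` of the intersection.
  obtain ⟨i, hi⟩ : ∃ i, K i ⊆ U ∪ V := by
    refine exists_subset_nhds_of_isCompact' hd hc hcl fun x hx => (hU.union hV).mem_nhds ?_
    rcases huv hx with h | h
    exacts [Or.inl (huU ⟨hx, h⟩), Or.inr (hvV ⟨hx, h⟩)]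
  have hsub := iInter_subset K i
  rcases (hK i).subset_or_subset hU hV hUV hi with h | h
  · refine Or.inl fun x hx => (huv hx).resolve_right fun hxv => ?_
    exact hUV.ne_of_mem (h (hsub hx)) (hvV ⟨hx, hxv⟩) rfl
  · refine Or.inr fun x hx => (huv hx).resolve_left fun hxu => ?_
    exact hUV.ne_of_mem (huU ⟨hx, hxu⟩) (h (hsub hx)) rfl

section

variable {X Y : Type*} [TopologicalSpace X] [MetricSpace Y] {f : X → Y}

theorem closure_connectedComponentIn_preimage_ball_subset (hf : Continuous f) (y : Y) (ε : ℝ)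
    (x : X) :
    closure (connectedComponentIn (f ⁻¹' Metric.ball y ε) x) ⊆ f ⁻¹' Metric.closedBall y ε :=
  closure_minimal ((connectedComponentIn_subset _ _).trans
    (preimage_mono Metric.ball_subset_closedBall)) (Metric.isClosed_closedBall.preimage hf)

theorem biInter_closure_connectedComponentIn_preimage_ball_subset (hf : Continuous f) (y : Y)
    (x : X) {ε₁ : ℝ} (hε₁ : 0 < ε₁) :
    ⋂ ε ∈ Ioc (0 : ℝ) ε₁, closure (connectedComponentIn (f ⁻¹' Metric.ball y ε) x) ⊆
      f ⁻¹' {y} := by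
  intro x' hx'
  refine eq_of_forall_dist_le fun ε hε => ?_
  have hx'ε := closure_connectedComponentIn_preimage_ball_subset hf y (min ε ε₁) x
    (mem_iInter₂.1 hx' _ ⟨lt_min hε hε₁, min_le_right ε ε₁⟩)
  exact (Metric.mem_closedBall.1 hx'ε).trans (min_le_left ε ε₁)

end

theorem stmt_9_general {X : Type*} [MetricSpace X]
    (n : ℕ) (f : X → EuclideanSpace ℝ (Fin n)) (hf : Continuous f)
    (y₀ : EuclideanSpace ℝ (Fin n))
    (hfiber : IsTotallyDisconnected (f ⁻¹' {y₀}))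
    (x₀ : X) (hx₀ : f x₀ = y₀) (ε₁ : ℝ) (hε₁ : 0 < ε₁)
    (hcpt : IsCompact (closure (connectedComponentIn (f ⁻¹' Metric.ball y₀ ε₁) x₀))) :
    ⋂ ε ∈ Set.Ioc (0 : ℝ) ε₁,
        closure (connectedComponentIn (f ⁻¹' Metric.ball y₀ ε) x₀) = {x₀} := by
  set C : ℝ → Set X := fun ε => closure (connectedComponentIn (f ⁻¹' Metric.ball y₀ ε) x₀)
  have hmono : Monotone C := fun ε ε' h =>
    closure_mono (connectedComponentIn_mono _ (preimage_mono (Metric.ball_subset_ball h)))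
  have hx₀C : x₀ ∈ ⋂ ε ∈ Ioc (0 : ℝ) ε₁, C ε := mem_iInter₂.2 fun ε hε =>
    subset_closure (mem_connectedComponentIn (by simpa [hx₀] using hε.1))
  have hpre : IsPreconnected (⋂ ε ∈ Ioc (0 : ℝ) ε₁, C ε) := by
    have : Nonempty (Ioc (0 : ℝ) ε₁) := ⟨⟨ε₁, hε₁, le_rfl⟩⟩
    rw [biInter_eq_iInter]
    exact IsPreconnected.iInter_of_directed (hmono.comp (Subtype.mono_coe _)).directed_ge
      (fun ε => hcpt.of_isClosed_subset isClosed_closure (hmono ε.2.2))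
      (fun _ => isPreconnected_connectedComponentIn.closure)
  exact (hfiber _ (biInter_closure_connectedComponentIn_preimage_ball_subset hf y₀ x₀ hε₁)
    hpre).eq_singleton_of_mem hx₀C

/-- Under the hypotheses of the compact-closure corollary, the closures of the components
`U_ε(x₀)` of `x₀` in `f⁻¹(B(y₀, ε))` shrink to `{x₀}` as `ε → 0⁺`. -/
theorem stmt_9 {X : Type*} [MetricSpace X] [LocallyCompactSpace X]
    (n : ℕ) (f : X → EuclideanSpace ℝ (Fin n)) (hf : Continuous f)
    (y₀ : EuclideanSpace ℝ (Fin n))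
    (hfiber : IsTotallyDisconnected (f ⁻¹' {y₀}))
    (x₀ : X) (hx₀ : f x₀ = y₀) (ε₁ : ℝ) (hε₁ : 0 < ε₁)
    (hcpt : IsCompact (closure (connectedComponentIn (f ⁻¹' Metric.ball y₀ ε₁) x₀))) :
    ⋂ ε ∈ Set.Ioc (0 : ℝ) ε₁,
        closure (connectedComponentIn (f ⁻¹' Metric.ball y₀ ε) x₀) = {x₀} :=
  stmt_9_general n f hf y₀ hfiber x₀ hx₀ ε₁ hε₁ hcpt
end

section
/- Let X be a locally compact metric space, f : X → ℝⁿ a continuous map, and y₀ ∈ ℝⁿ such that the fiber f⁻¹{y₀} is totally disconnected. Then for any two distinct points x₁, x₂ ∈ f⁻¹{y₀} there exists ε₀ > 0 such that x₁ and x₂ lie in different connected components of f⁻¹(B(y₀, ε₀)); that is, x₂ ∉ U_{ε₀}(x₁). -/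
/-!
The fiber `F = f⁻¹{y₀}` is closed, hence locally compact, and totally disconnected, hence
zero-dimensional: `x₁` has a compact clopen neighbourhood `V` in `F` missing `x₂`. Since `V` and
`F \ V` are disjoint closed sets of `X` with `V` compact, `V` lies in an open set `U ∌ x₂` with
compact closure whose frontier misses `F`. The image under `f` of that compact frontier is then a
compact set missing `y₀`, so some ball `B(y₀, ε₀)` misses it too; hence `f⁻¹(B(y₀, ε₀))` does not
meet the frontier of `U`, and its component through `x₁` stays inside `U`.
-/

open Set

theorem exists_isClopen_isCompact_mem_notMem {Y : Type*} [TopologicalSpace Y]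
    [LocallyCompactSpace Y] [T2Space Y] [TotallyDisconnectedSpace Y] {p q : Y} (hpq : p ≠ q) :
    ∃ V : Set Y, IsClopen V ∧ IsCompact V ∧ p ∈ V ∧ q ∉ V := by
  obtain ⟨s, hs, hps, hsq⟩ := exists_compact_subset isClosed_singleton.isOpen_compl hpq
  obtain ⟨V, hV, hpV, hVs⟩ :=
    loc_compact_Haus_tot_disc_of_zero_dim.mem_nhds_iff.1 (isOpen_interior.mem_nhds hps)
  exact ⟨V, hV, hs.of_isClosed_subset hV.isClosed (hVs.trans interior_subset), hpV,
    fun hqV => hsq (interior_subset (hVs hqV)) rfl⟩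

theorem IsClosed.exists_isOpen_disjoint_frontier {X : Type*} [TopologicalSpace X]
    [LocallyCompactSpace X] [T2Space X] {F : Set X} (hF : IsClosed F)
    (hFd : IsTotallyDisconnected F) {p q : X} (hp : p ∈ F) (hq : q ∈ F) (hpq : p ≠ q) :
    ∃ U : Set X, IsOpen U ∧ IsCompact (closure U) ∧ p ∈ U ∧ q ∉ U ∧ Disjoint (frontier U) F := by
  have : LocallyCompactSpace F := hF.locallyCompactSpace
  have : TotallyDisconnectedSpace F := totallyDisconnectedSpace_subtype_iff.2 hFd
  obtain ⟨V, hV, hVc, hpV, hqV⟩ :=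
    exists_isClopen_isCompact_mem_notMem (p := (⟨p, hp⟩ : F)) (q := ⟨q, hq⟩)
      (by simpa using hpq)
  have hCc : IsClosed (Subtype.val '' Vᶜ) :=
    hF.isClosedEmbedding_subtypeVal.isClosed_iff_image_isClosed.1 hV.compl.isClosed
  have hKC : Subtype.val '' V ⊆ (Subtype.val '' Vᶜ)ᶜ :=
    ((disjoint_image_iff Subtype.val_injective).2 disjoint_compl_right).subset_compl_right
  obtain ⟨U, hUo, hKU, hUC, hUc⟩ := exists_open_between_and_isCompact_closure
    (hVc.image continuous_subtype_val) hCc.isOpen_compl hKC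
  refine ⟨U, hUo, hUc, hKU ⟨_, hpV, rfl⟩,
    fun hqU => hUC (subset_closure hqU) ⟨⟨q, hq⟩, hqV, rfl⟩, ?_⟩
  refine disjoint_left.2 fun x ⟨hxU, hxU'⟩ hxF => hxU' ?_
  rw [hUo.interior_eq]
  by_cases hxV : (⟨x, hxF⟩ : F) ∈ V
  · exact hKU ⟨_, hxV, rfl⟩
  · exact absurd ⟨⟨x, hxF⟩, hxV, rfl⟩ (hUC hxU)

theorem connectedComponentIn_subset_of_disjoint_frontier {X : Type*} [TopologicalSpace X]
    {S U : Set X} {x : X} (hU : IsOpen U) (hSU : Disjoint S (frontier U)) (hx : x ∈ U) :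
    connectedComponentIn S x ⊆ U := by
  by_cases hxS : x ∈ S
  · refine isPreconnected_connectedComponentIn.subset_of_closure_inter_subset hU
      ⟨x, mem_connectedComponentIn hxS, hx⟩ fun y ⟨hyU, hyS⟩ => ?_
    by_contra hy
    exact disjoint_left.1 hSU (connectedComponentIn_subset S x hyS) ⟨hyU, by rwa [hU.interior_eq]⟩
  · simp [connectedComponentIn_eq_empty hxS]

/-- Distinct points of a totally disconnected fiber are separated into different
components of `f⁻¹(B(y₀, ε₀))` for some `ε₀ > 0`. -/
theorem stmt_10 {X : Type*} [MetricSpace X] [LocallyCompactSpace X]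
    (n : ℕ) (f : X → EuclideanSpace ℝ (Fin n)) (hf : Continuous f)
    (y₀ : EuclideanSpace ℝ (Fin n))
    (hfiber : IsTotallyDisconnected (f ⁻¹' {y₀}))
    (x₁ x₂ : X) (hx₁ : f x₁ = y₀) (hx₂ : f x₂ = y₀) (hne : x₁ ≠ x₂) :
    ∃ ε₀ : ℝ, 0 < ε₀ ∧ x₂ ∉ connectedComponentIn (f ⁻¹' Metric.ball y₀ ε₀) x₁ := by
  obtain ⟨U, hUo, hUc, hx₁U, hx₂U, hUF⟩ :=
    (isClosed_singleton.preimage hf).exists_isOpen_disjoint_frontier hfiber hx₁ hx₂ hne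
  have hfrU : IsCompact (frontier U) :=
    hUc.of_isClosed_subset isClosed_frontier frontier_subset_closure
  have hy₀ : y₀ ∉ f '' frontier U := fun ⟨x, hx, hfx⟩ => disjoint_left.1 hUF hx hfx
  obtain ⟨ε₀, hε₀, hball⟩ := Metric.isOpen_iff.1 (hfrU.image hf).isClosed.isOpen_compl y₀ hy₀
  have hS : Disjoint (f ⁻¹' Metric.ball y₀ ε₀) (frontier U) :=
    disjoint_left.2 fun x hx hxU => hball hx ⟨x, hxU, rfl⟩
  exact ⟨ε₀, hε₀, fun hx₂C =>
    hx₂U (connectedComponentIn_subset_of_disjoint_frontier hUo hS hx₁U hx₂C)⟩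
end

section
/- Let X be a locally compact metric space, f : X → ℝⁿ a continuous map, and y₀ ∈ ℝⁿ such that the fiber f⁻¹{y₀} is totally disconnected. Let n ≥ 1, let x₀ ∈ f⁻¹{y₀}, and suppose ε₁ > 0 is such that the closure of U_{ε₁}(x₀) is compact, contained in X, and has finite n-dimensional Hausdorff measure H^n(closure(U_{ε₁}(x₀))) < ∞. Then H^n(U_ε(x₀)) → 0 as ε → 0⁺. -/
open MeasureTheory

/-- A decreasing intersection of nonempty compact closed preconnected sets in a T2 space
is preconnected. -/
lemma aux_isPreconnected_iInter {Y : Type*} [TopologicalSpace Y] [T2Space Y]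
    (K : ℕ → Set Y) (hK : ∀ i, IsCompact (K i)) (hcl : ∀ i, IsClosed (K i))
    (hne : ∀ i, (K i).Nonempty) (hconn : ∀ i, IsPreconnected (K i))
    (hanti : Antitone K) : IsPreconnected (⋂ i, K i) := by
  intro u v hu hv hsub hneu hnev
  by_contra hcontra
  rw [Set.not_nonempty_iff_eq_empty] at hcontra
  set S : Set Y := ⋂ i, K i with hS
  have hScl : IsClosed S := isClosed_iInter hcl
  have hScp : IsCompact S := (hK 0).of_isClosed_subset hScl (Set.iInter_subset _ 0)
  set A : Set Y := S \ v with hA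
  set B : Set Y := S \ u with hB
  have hAcp : IsCompact A := hScp.diff hv
  have hBcp : IsCompact B := hScp.diff hu
  have hdisj : Disjoint A B := by
    rw [Set.disjoint_left]
    rintro z ⟨hzS, hzv⟩ ⟨-, hzu⟩
    rcases hsub hzS with h | h
    · exact hzu h
    · exact hzv h
  have hAne : A.Nonempty := by
    obtain ⟨z, hzS, hzu⟩ := hneu
    refine ⟨z, hzS, fun hzv => ?_⟩
    have : z ∈ S ∩ (u ∩ v) := ⟨hzS, hzu, hzv⟩
    simp [hcontra] at this
  have hBne : B.Nonempty := by
    obtain ⟨z, hzS, hzv⟩ := hnev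
    refine ⟨z, hzS, fun hzu => ?_⟩
    have : z ∈ S ∩ (u ∩ v) := ⟨hzS, hzu, hzv⟩
    simp [hcontra] at this
  obtain ⟨U, V, hUo, hVo, hAU, hBV, hUV⟩ :=
    SeparatedNhds.of_isCompact_isCompact hAcp hBcp hdisj
  have hSsub : S ⊆ U ∪ V := by
    intro z hzS
    rcases hsub hzS with h | h
    · left
      apply hAU
      refine ⟨hzS, fun hzv => ?_⟩
      have : z ∈ S ∩ (u ∩ v) := ⟨hzS, h, hzv⟩
      simp [hcontra] at this
    · right
      apply hBV
      refine ⟨hzS, fun hzu => ?_⟩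
      have : z ∈ S ∩ (u ∩ v) := ⟨hzS, hzu, h⟩
      simp [hcontra] at this
  have hex : ∃ n, K n ⊆ U ∪ V := by
    by_contra hnex
    push_neg at hnex
    have hDne : ∀ n, (K n \ (U ∪ V)).Nonempty := by
      intro n
      rw [Set.diff_nonempty]
      exact fun h => (hnex n) h
    have hdir : Directed (· ⊇ ·) (fun n => K n \ (U ∪ V)) := by
      intro i j
      exact ⟨max i j, Set.diff_subset_diff_left (hanti (le_max_left i j)),
        Set.diff_subset_diff_left (hanti (le_max_right i j))⟩
    have hnonempty : (⋂ n, K n \ (U ∪ V)).Nonempty :=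
      IsCompact.nonempty_iInter_of_directed_nonempty_isCompact_isClosed
        (fun n => K n \ (U ∪ V)) hdir hDne
        (fun n => (hK n).diff (hUo.union hVo))
        (fun n => (hcl n).sdiff (hUo.union hVo))
    obtain ⟨z, hz⟩ := hnonempty
    have hzS : z ∈ S := by
      rw [hS, Set.mem_iInter]
      intro n
      exact ((Set.mem_iInter.1 hz) n).1
    exact ((Set.mem_iInter.1 hz) 0).2 (hSsub hzS)
  obtain ⟨n, hn⟩ := hex
  have hSK : S ⊆ K n := Set.iInter_subset _ n
  obtain ⟨a, haA⟩ := hAne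
  obtain ⟨b, hbB⟩ := hBne
  have : (K n ∩ (U ∩ V)).Nonempty :=
    hconn n U V hUo hVo hn ⟨a, hSK haA.1, hAU haA⟩ ⟨b, hSK hbB.1, hBV hbB⟩
  obtain ⟨z, -, hzU, hzV⟩ := this
  exact (Set.disjoint_left.1 hUV) hzU hzV

/-- If `closure (U_{ε₁}(x₀))` is compact with finite `n`-dimensional Hausdorff measure,
then `H^n(U_ε(x₀)) → 0` as `ε → 0⁺`. -/
theorem stmt_11 {X : Type*} [MetricSpace X] [LocallyCompactSpace X]
    [MeasurableSpace X] [BorelSpace X]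
    (n : ℕ) (hn : 1 ≤ n) (f : X → EuclideanSpace ℝ (Fin n)) (hf : Continuous f)
    (y₀ : EuclideanSpace ℝ (Fin n))
    (hfiber : IsTotallyDisconnected (f ⁻¹' {y₀}))
    (x₀ : X) (hx₀ : f x₀ = y₀) (ε₁ : ℝ) (hε₁ : 0 < ε₁)
    (hcpt : IsCompact (closure (connectedComponentIn (f ⁻¹' Metric.ball y₀ ε₁) x₀)))
    (hfin : μH[(n : ℝ)] (closure (connectedComponentIn (f ⁻¹' Metric.ball y₀ ε₁) x₀)) < ⊤) :
    Filter.Tendsto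
      (fun ε : ℝ => μH[(n : ℝ)] (connectedComponentIn (f ⁻¹' Metric.ball y₀ ε) x₀))
      (nhdsWithin 0 (Set.Ioi (0 : ℝ))) (nhds 0) := by
  set U : ℝ → Set X := fun ε => connectedComponentIn (f ⁻¹' Metric.ball y₀ ε) x₀ with hU
  have hUmono : ∀ {a b : ℝ}, a ≤ b → U a ⊆ U b := fun {a b} hab =>
    connectedComponentIn_mono x₀ (Set.preimage_mono (Metric.ball_subset_ball hab))
  have hx₀mem : ∀ {ε : ℝ}, 0 < ε → x₀ ∈ U ε := fun {ε} hε =>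
    mem_connectedComponentIn (by simp [hx₀, hε])
  -- the sequence of radii
  set r : ℕ → ℝ := fun k => ε₁ / (k + 1) with hr
  have hrpos : ∀ k, 0 < r k := fun k => div_pos hε₁ (by positivity)
  have hrle : ∀ k, r k ≤ ε₁ := fun k => by
    rw [hr]
    rw [div_le_iff₀ (by positivity : (0:ℝ) < (k:ℝ) + 1)]
    nlinarith [Nat.cast_nonneg (α := ℝ) k, hε₁.le]
  have hranti : Antitone r := fun i j hij => by
    apply div_le_div_of_nonneg_left hε₁.le (by positivity)
    have : (i:ℝ) ≤ (j:ℝ) := Nat.cast_le.2 hij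
    linarith
  set K : ℕ → Set X := fun k => closure (U (r k)) with hK
  have hKanti : Antitone K := fun i j hij => closure_mono (hUmono (hranti hij))
  have hKsub : ∀ k, K k ⊆ closure (U ε₁) := fun k => closure_mono (hUmono (hrle k))
  have hKcp : ∀ k, IsCompact (K k) :=
    fun k => hcpt.of_isClosed_subset isClosed_closure (hKsub k)
  have hKcl : ∀ k, IsClosed (K k) := fun k => isClosed_closure
  have hKne : ∀ k, (K k).Nonempty := fun k => ⟨x₀, subset_closure (hx₀mem (hrpos k))⟩
  have hKconn : ∀ k, IsPreconnected (K k) :=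
    fun k => isPreconnected_connectedComponentIn.closure
  -- the intersection is contained in the fiber
  have hSfiber : (⋂ k, K k) ⊆ f ⁻¹' {y₀} := by
    intro z hz
    have hd : ∀ k, dist (f z) y₀ ≤ r k := by
      intro k
      have h1 : U (r k) ⊆ f ⁻¹' Metric.ball y₀ (r k) := connectedComponentIn_subset _ _
      have h2 : K k ⊆ f ⁻¹' Metric.closedBall y₀ (r k) := by
        rw [hK]
        calc closure (U (r k)) ⊆ closure (f ⁻¹' Metric.ball y₀ (r k)) := closure_mono h1
          _ ⊆ f ⁻¹' Metric.closedBall y₀ (r k) := by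
              apply closure_minimal _ (Metric.isClosed_closedBall.preimage hf)
              exact Set.preimage_mono Metric.ball_subset_closedBall
      exact h2 (Set.mem_iInter.1 hz k)
    have : dist (f z) y₀ ≤ 0 := by
      by_contra hc
      push_neg at hc
      obtain ⟨k, hk⟩ := exists_nat_gt (ε₁ / dist (f z) y₀)
      have : r k < dist (f z) y₀ := by
        rw [hr, div_lt_iff₀ (by positivity : (0:ℝ) < (k:ℝ) + 1)]
        have := (div_lt_iff₀ hc).1 hk
        nlinarith
      exact absurd (hd k) (not_le.2 this)
    simp [Set.mem_preimage, Set.mem_singleton_iff, ← dist_le_zero]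
    exact this
  -- the intersection is preconnected, hence a subsingleton
  have hSconn : IsPreconnected (⋂ k, K k) :=
    aux_isPreconnected_iInter K hKcp hKcl hKne hKconn hKanti
  have hSsub : (⋂ k, K k).Subsingleton := hfiber _ hSfiber hSconn
  have hpos : (0 : ℝ) < (n : ℝ) := by exact_mod_cast hn
  haveI : NoAtoms (μH[(n : ℝ)] : Measure X) := Measure.noAtoms_hausdorff X hpos
  have hS0 : μH[(n : ℝ)] (⋂ k, K k) = 0 := @Set.Subsingleton.measure_zero X _ _ hSsub _ this
  -- continuity from above
  have htendsto : Filter.Tendsto (fun k => μH[(n : ℝ)] (K k)) Filter.atTop (nhds 0) := by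
    have := tendsto_measure_iInter_atTop (μ := (μH[(n : ℝ)] : Measure X))
      (s := K) (fun k => ((hKcl k).measurableSet).nullMeasurableSet) hKanti
      ⟨0, by
        have : μH[(n : ℝ)] (K 0) ≤ μH[(n : ℝ)] (closure (U ε₁)) := measure_mono (hKsub 0)
        exact (this.trans_lt hfin).ne⟩
    rwa [hS0] at this
  -- conclude
  rw [ENNReal.tendsto_nhds_zero]
  intro δ hδ
  have : ∀ᶠ k in Filter.atTop, μH[(n : ℝ)] (K k) < δ :=
    htendsto.eventually_lt_const (by exact hδ.bot_lt)
  obtain ⟨k, hk⟩ := this.exists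
  filter_upwards [Ioc_mem_nhdsGT_of_mem (Set.mem_Ico.2 ⟨le_refl (0:ℝ), hrpos k⟩)] with ε hε
  calc μH[(n : ℝ)] (U ε) ≤ μH[(n : ℝ)] (U (r k)) := measure_mono (hUmono hε.2)
    _ ≤ μH[(n : ℝ)] (K k) := measure_mono subset_closure
    _ ≤ δ := hk.le
end
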